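/- arXiv:1706.07954 — 2 statements merged into one kernel-verified Lean document; each statement's English description precedes it below -/
import Mathlib

section
/- The Pólya ideal I_𝔭 := {S ⊆ ℕ : 𝔭*(S) = 0} is thinnable, where 𝔭*(S) = lim_{s→1⁻} limsup_{n→∞} |S ∩ [ns, n]|/((1−s)n) is the upper Pólya density. -/
open Filter Topology MeasureTheory Set

/-- The canonical (increasing) enumeration of a set of natural numbers. -/
noncomputable def enumOf (A : Set ℕ) : ℕ → ℕ := Nat.nth (· ∈ A)

/-- `idxSet A B` is the set `A_B = {a_b : b ∈ B}`, where `{a_n}` is the canonical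
enumeration of `A`. -/
noncomputable def idxSet (A B : Set ℕ) : Set ℕ := enumOf A '' B

/-- `seqLE X Y` means `X ≤ Y`, i.e. `x_n ≤ y_n` for all `n`, for the canonical
enumerations `{x_n}` of `X` and `{y_n}` of `Y`. -/
def seqLE (X Y : Set ℕ) : Prop := ∀ n, enumOf X n ≤ enumOf Y n

/-- `A` has asymptotic density `c`: `|A ∩ [1,n]| / n → c`. -/
def HasDensity (A : Set ℕ) (c : ℝ) : Prop :=
  Tendsto (fun n : ℕ => ((A ∩ Set.Icc 1 n).ncard : ℝ) / n) atTop (𝓝 c)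

/-- An ideal on ℕ: closed under finite unions and subsets, contains all finite sets,
and is not the whole power set. -/
def IsIdeal (I : Set (Set ℕ)) : Prop :=
  (∀ A B : Set ℕ, A ∈ I → B ∈ I → A ∪ B ∈ I) ∧
  (∀ A B : Set ℕ, A ⊆ B → B ∈ I → A ∈ I) ∧
  (∀ A : Set ℕ, A.Finite → A ∈ I) ∧
  Set.univ ∉ I

/-- `I` is weakly thinnable: `A_B ∉ I` whenever `A` admits non-zero asymptotic density
and `B ∉ I`. -/
def WeaklyThinnable (I : Set (Set ℕ)) : Prop :=
  ∀ A B : Set ℕ, (∃ c : ℝ, c ≠ 0 ∧ HasDensity A c) → B ∉ I → idxSet A B ∉ I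

/-- `I` is thinnable: weakly thinnable, `B_A ∉ I` whenever `A` admits non-zero asymptotic
density and `B ∉ I`, and `X ∉ I` whenever `X ≤ Y` and `Y ∉ I`. -/
def Thinnable (I : Set (Set ℕ)) : Prop :=
  WeaklyThinnable I ∧
  (∀ A B : Set ℕ, (∃ c : ℝ, c ≠ 0 ∧ HasDensity A c) → B ∉ I → idxSet B A ∉ I) ∧
  (∀ X Y : Set ℕ, X.Infinite → Y.Infinite → seqLE X Y → Y ∉ I → X ∉ I)

/-- `I` is strechable: `kA ∉ I` for all (positive) `k` and all `A ∉ I`. -/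
def Strechable (I : Set (Set ℕ)) : Prop :=
  ∀ k : ℕ, 0 < k → ∀ A : Set ℕ, A ∉ I → (fun a => k * a) '' A ∉ I

/-- The Pólya ideal `I_𝔭 = {S : 𝔭⋆(S) = 0}`, where
`𝔭⋆(S) = lim_{s → 1⁻} limsup_n |S ∩ [ns, n]| / ((1-s) n)`. -/
def polyaIdeal : Set (Set ℕ) :=
  {S : Set ℕ | Tendsto (fun s : ℝ =>
      limsup (fun n : ℕ =>
        ((S ∩ {i : ℕ | s * (n : ℝ) ≤ (i : ℝ) ∧ i ≤ n}).ncard : ℝ) / ((1 - s) * n)) atTop)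
    (𝓝[<] (1 : ℝ)) (𝓝 0)}

/-! ### Auxiliary development -/

attribute [local instance] Classical.propDecidable

/-- The counting function of a set of naturals: `cnt S n = |S ∩ [0, n)|`. -/
noncomputable def cnt (S : Set ℕ) : ℕ → ℕ := Nat.count (· ∈ S)

lemma cnt_def (S : Set ℕ) (n : ℕ) : cnt S n = Nat.count (· ∈ S) n := rfl

lemma cnt_le (S : Set ℕ) (n : ℕ) : cnt S n ≤ n := by rw [cnt_def]; exact Nat.count_le _

lemma cnt_mono (S : Set ℕ) {a b : ℕ} (h : a ≤ b) : cnt S a ≤ cnt S b :=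
  Nat.count_monotone _ h

lemma cnt_eq_ncard (S : Set ℕ) (n : ℕ) : cnt S n = (S ∩ Set.Iio n).ncard := by
  rw [cnt_def, Nat.count_eq_card_filter_range]
  rw [show S ∩ Set.Iio n = (((Finset.range n).filter (fun x => x ∈ S) : Finset ℕ) : Set ℕ) by
    ext x
    simp only [Finset.coe_filter, Finset.mem_range, Set.mem_inter_iff, Set.mem_Iio,
      Set.mem_setOf_eq]
    tauto]
  rw [Set.ncard_coe_finset]

/-- Zero upper density, in a convenient `∀ ε` form. -/
def ZC (S : Set ℕ) : Prop :=
  ∀ ε : ℝ, 0 < ε → ∀ᶠ n : ℕ in atTop, (cnt S n : ℝ) ≤ ε * n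

lemma eventually_of_succ {P : ℕ → Prop} (h : ∀ᶠ n in atTop, P (n + 1)) :
    ∀ᶠ n in atTop, P n := by
  obtain ⟨N, hN⟩ := eventually_atTop.1 h
  refine eventually_atTop.2 ⟨N + 1, fun m hm => ?_⟩
  obtain ⟨n, rfl⟩ : ∃ n, m = n + 1 := ⟨m - 1, by omega⟩
  exact hN n (by omega)

lemma tendsto_zero' {f : ℕ → ℝ} (h0 : ∀ᶠ n in atTop, 0 ≤ f n)
    (h : ∀ ε : ℝ, 0 < ε → ∀ᶠ n in atTop, f n ≤ ε) : Tendsto f atTop (𝓝 0) := by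
  refine tendsto_order.2 ⟨fun a ha => h0.mono fun n hn => lt_of_lt_of_le ha hn,
    fun a ha => (h (a / 2) (by linarith)).mono fun n hn => lt_of_le_of_lt hn (by linarith)⟩

/-! #### Counting lemmas for the Pólya intervals -/

lemma P_le_cnt (S : Set ℕ) (s : ℝ) (n : ℕ) :
    (S ∩ {i : ℕ | s * (n : ℝ) ≤ (i : ℝ) ∧ i ≤ n}).ncard ≤ cnt S (n + 1) := by
  rw [cnt_eq_ncard]
  apply Set.ncard_le_ncard _ ((Set.finite_Iio (n + 1)).inter_of_right S)
  rintro i ⟨hiS, -, hin⟩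
  exact ⟨hiS, Nat.lt_succ_of_le hin⟩

lemma cnt_split (S : Set ℕ) (s : ℝ) (n : ℕ) :
    cnt S (n + 1) ≤ cnt S (⌊s * (n : ℝ)⌋₊ + 1)
      + (S ∩ {i : ℕ | s * (n : ℝ) ≤ (i : ℝ) ∧ i ≤ n}).ncard := by
  rw [cnt_eq_ncard, cnt_eq_ncard]
  refine le_trans (Set.ncard_le_ncard ?_ ?_) (Set.ncard_union_le _ _)
  · rintro i ⟨hiS, hin⟩
    have hin' : i ≤ n := Nat.lt_succ_iff.1 hin
    rcases le_or_gt i ⌊s * (n : ℝ)⌋₊ with h | h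
    · exact Or.inl ⟨hiS, Nat.lt_succ_of_le h⟩
    · refine Or.inr ⟨hiS, ?_, hin'⟩
      have h1 : s * (n : ℝ) < (⌊s * (n : ℝ)⌋₊ : ℝ) + 1 := Nat.lt_floor_add_one _
      have h2 : (⌊s * (n : ℝ)⌋₊ : ℝ) + 1 ≤ (i : ℝ) := by exact_mod_cast h
      linarith
  · refine Set.Finite.union ((Set.finite_Iio _).inter_of_right S) ?_
    refine (Set.finite_Iic n).subset ?_
    rintro i ⟨-, -, h⟩
    exact h

/-! #### `polyaIdeal` membership is equivalent to zero density -/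

lemma mem_polya_of_zc {S : Set ℕ} (h : ZC S) : S ∈ polyaIdeal := by
  simp only [polyaIdeal, Set.mem_setOf_eq]
  have key : ∀ s : ℝ, s < 1 →
      limsup (fun n : ℕ =>
        ((S ∩ {i : ℕ | s * (n : ℝ) ≤ (i : ℝ) ∧ i ≤ n}).ncard : ℝ) / ((1 - s) * n)) atTop
      = (0 : ℝ) := by
    intro s hs
    have h1s : 0 < 1 - s := by linarith
    apply Tendsto.limsup_eq
    apply tendsto_zero'
    · exact Eventually.of_forall fun n =>
        div_nonneg (Nat.cast_nonneg _) (mul_nonneg h1s.le (Nat.cast_nonneg _))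
    · intro ε hε
      have h2 := h (ε * (1 - s) / 4) (by positivity)
      obtain ⟨N, hN⟩ := eventually_atTop.1 h2
      refine eventually_atTop.2 ⟨max N 1, fun n hn => ?_⟩
      have hn1 : 1 ≤ n := le_trans (le_max_right _ _) hn
      have hNn : N ≤ n + 1 := by
        have := le_trans (le_max_left N 1) hn; omega
      have hcnt := hN (n + 1) hNn
      have hP : ((S ∩ {i : ℕ | s * (n : ℝ) ≤ (i : ℝ) ∧ i ≤ n}).ncard : ℝ)
          ≤ (cnt S (n + 1) : ℝ) := by exact_mod_cast P_le_cnt S s n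
      have hnR : (1 : ℝ) ≤ (n : ℝ) := by exact_mod_cast hn1
      rw [div_le_iff₀ (by positivity)]
      push_cast at hcnt
      nlinarith [hε.le, h1s.le, mul_nonneg (mul_nonneg hε.le h1s.le) (by linarith : (0:ℝ) ≤ (n:ℝ))]
  have heq : (fun s : ℝ => limsup (fun n : ℕ =>
        ((S ∩ {i : ℕ | s * (n : ℝ) ≤ (i : ℝ) ∧ i ≤ n}).ncard : ℝ) / ((1 - s) * n)) atTop)
      =ᶠ[𝓝[<] (1 : ℝ)] (fun _ => (0 : ℝ)) := by
    filter_upwards [self_mem_nhdsWithin] with s hs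
    exact key s hs
  exact Tendsto.congr' heq.symm tendsto_const_nhds

lemma zc_of_mem_polya {S : Set ℕ} (hS : S ∈ polyaIdeal) : ZC S := by
  simp only [polyaIdeal, Set.mem_setOf_eq] at hS
  intro ε hε
  have hε' : (0 : ℝ) < ε / 4 := by positivity
  -- find a scale s ∈ (0,1) at which the Pólya limsup is < ε/4
  have h1 : ∀ᶠ s : ℝ in 𝓝[<] (1 : ℝ),
      limsup (fun n : ℕ =>
        ((S ∩ {i : ℕ | s * (n : ℝ) ≤ (i : ℝ) ∧ i ≤ n}).ncard : ℝ) / ((1 - s) * n)) atTop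
      < ε / 4 := hS.eventually (gt_mem_nhds hε')
  have h2 : ∀ᶠ s : ℝ in 𝓝[<] (1 : ℝ), s ∈ Set.Ioo (0 : ℝ) 1 :=
    Ioo_mem_nhdsLT (by norm_num)
  obtain ⟨s, hls, hs0, hs1⟩ := (h1.and h2).exists
  have h1s : (0 : ℝ) < 1 - s := by linarith
  -- from the limsup bound, an eventual interval-count bound
  have hbdd : IsBoundedUnder (· ≤ ·) atTop (fun n : ℕ =>
      ((S ∩ {i : ℕ | s * (n : ℝ) ≤ (i : ℝ) ∧ i ≤ n}).ncard : ℝ) / ((1 - s) * n)) := by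
    refine isBoundedUnder_of ⟨2 / (1 - s), fun n => ?_⟩
    rcases Nat.eq_zero_or_pos n with rfl | hn
    · simp only [Nat.cast_zero, mul_zero, div_zero]
      exact div_nonneg (by norm_num) h1s.le
    · have hnR : (1 : ℝ) ≤ (n : ℝ) := by exact_mod_cast hn
      have hPn : ((S ∩ {i : ℕ | s * (n : ℝ) ≤ (i : ℝ) ∧ i ≤ n}).ncard : ℝ) ≤ (n : ℝ) + 1 := by
        have := le_trans (P_le_cnt S s n) (cnt_le S (n + 1))
        exact_mod_cast this
      rw [div_le_div_iff₀ (by positivity) h1s]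
      nlinarith
  have hev : ∀ᶠ n : ℕ in atTop,
      ((S ∩ {i : ℕ | s * (n : ℝ) ≤ (i : ℝ) ∧ i ≤ n}).ncard : ℝ) ≤ ε / 4 * ((1 - s) * n) := by
    filter_upwards [eventually_lt_of_limsup_lt hls hbdd, eventually_ge_atTop 1] with n hn hn1
    have hnR : (0 : ℝ) < (n : ℝ) := by exact_mod_cast hn1
    rw [div_lt_iff₀ (by positivity)] at hn
    linarith
  obtain ⟨n₀, hn₀⟩ := eventually_atTop.1 hev
  -- the floor-scaling map
  set g : ℕ → ℕ := fun m => ⌊s * (m : ℝ)⌋₊ with hg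
  have hgle : ∀ m : ℕ, (g m : ℝ) ≤ s * m := fun m => Nat.floor_le (by positivity)
  have hggt : ∀ m : ℕ, s * m - 1 < (g m : ℝ) := fun m => Nat.sub_one_lt_floor _
  -- main chaining estimate
  have main : ∀ j : ℕ, ∀ n : ℕ, (∀ i, i < j → n₀ ≤ g^[i] n) →
      (cnt S (n + 1) : ℝ) ≤ s ^ j * n + 1 + ε / 4 * n := by
    intro j
    induction j with
    | zero =>
      intro n _
      have hcle : (cnt S (n + 1) : ℝ) ≤ (n : ℝ) + 1 := by exact_mod_cast cnt_le S (n + 1)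
      have : (0 : ℝ) ≤ ε / 4 * n := mul_nonneg hε'.le (Nat.cast_nonneg _)
      simp only [pow_zero, one_mul]
      linarith
    | succ j ih =>
      intro n hn
      have h0 : n₀ ≤ n := by simpa using hn 0 (Nat.succ_pos j)
      have hP := hn₀ n h0
      have hih := ih (g n) (fun i hi => by
        have := hn (i + 1) (Nat.succ_lt_succ hi)
        rwa [Function.iterate_succ_apply] at this)
      have hc1 : (cnt S (n + 1) : ℝ) ≤ (cnt S (g n + 1) : ℝ)
          + ((S ∩ {i : ℕ | s * (n : ℝ) ≤ (i : ℝ) ∧ i ≤ n}).ncard : ℝ) := by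
        exact_mod_cast cnt_split S s n
      have hm1 : s ^ j * (g n : ℝ) ≤ s ^ j * (s * n) :=
        mul_le_mul_of_nonneg_left (hgle n) (pow_nonneg hs0.le j)
      have hm2 : ε / 4 * (g n : ℝ) ≤ ε / 4 * (s * n) :=
        mul_le_mul_of_nonneg_left (hgle n) hε'.le
      rw [pow_succ]
      nlinarith
  -- pick k with s^k small
  obtain ⟨k, hk⟩ := exists_pow_lt_of_lt_one hε' hs1
  have hsk : (0 : ℝ) < s ^ k := pow_pos hs0 k
  -- lower bound for iterates of g
  have iterlb : ∀ i n : ℕ, s ^ i * n - i ≤ (g^[i] n : ℝ) := by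
    intro i
    induction i with
    | zero => intro n; simp
    | succ i ih =>
      intro n
      rw [Function.iterate_succ_apply']
      have h1 := hggt (g^[i] n)
      have h2 := ih n
      have h3 : s * (s ^ i * n - i) ≤ s * (g^[i] n : ℝ) :=
        mul_le_mul_of_nonneg_left h2 hs0.le
      have h4 : s * (i : ℝ) ≤ (i : ℝ) := by
        nlinarith [mul_nonneg (by linarith : (0:ℝ) ≤ 1 - s) (Nat.cast_nonneg (α := ℝ) i)]
      push_cast
      rw [pow_succ]
      nlinarith
  -- eventual bound on the counting function
  have hfin : ∀ᶠ n : ℕ in atTop, (cnt S (n + 1) : ℝ) ≤ s ^ k * n + 1 + ε / 4 * n := by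
    filter_upwards [tendsto_natCast_atTop_atTop.eventually_ge_atTop (((n₀ : ℝ) + k) / s ^ k)]
      with n hn
    apply main k n
    intro i hik
    have h1 : (n₀ : ℝ) + k ≤ s ^ k * n := by
      rw [div_le_iff₀ hsk] at hn; linarith
    have h2 : s ^ k ≤ s ^ i := pow_le_pow_of_le_one hs0.le hs1.le hik.le
    have h3 := iterlb i n
    have h4 : s ^ k * (n : ℝ) ≤ s ^ i * n :=
      mul_le_mul_of_nonneg_right h2 (Nat.cast_nonneg _)
    have hik' : (i : ℝ) ≤ (k : ℝ) := by exact_mod_cast hik.le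
    have : (n₀ : ℝ) ≤ (g^[i] n : ℝ) := by linarith
    exact_mod_cast this
  -- conclude
  apply eventually_of_succ (P := fun m => (cnt S m : ℝ) ≤ ε * m)
  filter_upwards [hfin, tendsto_natCast_atTop_atTop.eventually_ge_atTop (2 / ε)] with n h1 h2
  have h3 : (2 : ℝ) ≤ ε * n := by rw [div_le_iff₀ hε] at h2; linarith
  have h4 : s ^ k * (n : ℝ) ≤ ε / 4 * n :=
    mul_le_mul_of_nonneg_right hk.le (Nat.cast_nonneg _)
  push_cast
  linarith

/-! #### Density facts -/

lemma density_pos {A : Set ℕ} {c : ℝ} (hd : HasDensity A c) (hc : c ≠ 0) : 0 < c := by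
  have h0 : 0 ≤ c := ge_of_tendsto' hd fun n =>
    div_nonneg (Nat.cast_nonneg _) (Nat.cast_nonneg _)
  exact lt_of_le_of_ne h0 (Ne.symm hc)

lemma density_infinite {A : Set ℕ} {c : ℝ} (hd : HasDensity A c) (hc : 0 < c) : A.Infinite := by
  by_contra hfin
  rw [Set.not_infinite] at hfin
  have h0 : Tendsto (fun n : ℕ => ((A ∩ Set.Icc 1 n).ncard : ℝ) / n) atTop (𝓝 0) := by
    apply tendsto_zero'
    · exact Eventually.of_forall fun n =>
        div_nonneg (Nat.cast_nonneg _) (Nat.cast_nonneg _)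
    · intro ε hε
      filter_upwards [tendsto_natCast_atTop_atTop.eventually_ge_atTop ((A.ncard : ℝ) / ε),
        eventually_ge_atTop 1] with n hn hn1
      have hle : ((A ∩ Set.Icc 1 n).ncard : ℝ) ≤ (A.ncard : ℝ) := by
        exact_mod_cast Set.ncard_le_ncard Set.inter_subset_left hfin
      have h1 : (A.ncard : ℝ) ≤ ε * n := by rw [div_le_iff₀ hε] at hn; linarith
      have hnpos : (0 : ℝ) < (n : ℝ) := by exact_mod_cast hn1
      rw [div_le_iff₀ hnpos]
      linarith
  have := tendsto_nhds_unique hd h0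
  linarith

lemma cnt_ge_icc (A : Set ℕ) (n : ℕ) : (A ∩ Set.Icc 1 n).ncard ≤ cnt A (n + 1) := by
  rw [cnt_eq_ncard]
  apply Set.ncard_le_ncard _ ((Set.finite_Iio (n + 1)).inter_of_right A)
  rintro i ⟨hiA, -, h2⟩
  exact ⟨hiA, Nat.lt_succ_of_le h2⟩

lemma density_cnt_lb {A : Set ℕ} {c : ℝ} (hd : HasDensity A c) (hc : 0 < c) :
    ∀ᶠ u : ℕ in atTop, c / 4 * u ≤ (cnt A u : ℝ) := by
  have h1 : ∀ᶠ n : ℕ in atTop, c / 2 < ((A ∩ Set.Icc 1 n).ncard : ℝ) / n :=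
    hd.eventually (eventually_gt_nhds (by linarith))
  obtain ⟨N, hN⟩ := eventually_atTop.1 h1
  refine eventually_atTop.2 ⟨max (N + 1) 2, fun u hu => ?_⟩
  obtain ⟨n, rfl⟩ : ∃ n, u = n + 1 := ⟨u - 1, by omega⟩
  have hn : N ≤ n := by
    have := le_trans (le_max_left (N + 1) 2) hu; omega
  have hn1 : 1 ≤ n := by
    have := le_trans (le_max_right (N + 1) 2) hu; omega
  have hD := hN n hn
  have hnR : (1 : ℝ) ≤ (n : ℝ) := by exact_mod_cast hn1
  have hD2 : c / 2 * n ≤ ((A ∩ Set.Icc 1 n).ncard : ℝ) := by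
    rw [lt_div_iff₀ (by linarith)] at hD
    linarith
  have hcnt : ((A ∩ Set.Icc 1 n).ncard : ℝ) ≤ (cnt A (n + 1) : ℝ) := by
    exact_mod_cast cnt_ge_icc A n
  push_cast
  nlinarith

lemma density_nth_ub {A : Set ℕ} {c : ℝ} (hd : HasDensity A c) (hc : 0 < c)
    (hA' : {n : ℕ | n ∈ A}.Infinite) :
    ∀ᶠ m : ℕ in atTop, (Nat.nth (· ∈ A) m : ℝ) ≤ 8 / c * m := by
  obtain ⟨U, hU⟩ := eventually_atTop.1 (density_cnt_lb hd hc)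
  refine eventually_atTop.2 ⟨max U 1, fun m hm => ?_⟩
  have hm1 : 1 ≤ m := le_trans (le_max_right _ _) hm
  have hmU : U ≤ m := le_trans (le_max_left _ _) hm
  have hle : U ≤ Nat.nth (· ∈ A) m + 1 := by
    have := Nat.le_nth (p := (· ∈ A)) (n := m) (fun hf => absurd hf hA')
    omega
  have h1 := hU _ hle
  have h2 : cnt A (Nat.nth (· ∈ A) m + 1) = m + 1 := Nat.count_nth_succ_of_infinite hA' m
  rw [h2] at h1
  have hmR : (1 : ℝ) ≤ (m : ℝ) := by exact_mod_cast hm1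
  push_cast at h1
  rw [div_mul_eq_mul_div, le_div_iff₀ hc]
  nlinarith

/-! #### Transfer of zero density through the operations -/

lemma cnt_idx (A B : Set ℕ) (hA : A.Infinite) (x : ℕ) :
    cnt (idxSet A B) x = cnt B (cnt A x) := by
  have hA' : {n : ℕ | n ∈ A}.Infinite := by rwa [Set.setOf_mem_eq]
  rw [cnt_def, cnt_def, cnt_def]
  rw [Nat.count_eq_card_filter_range (fun y => y ∈ idxSet A B) x]
  rw [show (Finset.range x).filter (fun y => y ∈ idxSet A B)
      = ((Finset.range (Nat.count (· ∈ A) x)).filter (fun y => y ∈ B)).image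
        (Nat.nth (· ∈ A)) from ?_]
  · rw [Finset.card_image_of_injective _ (Nat.nth_injective hA'),
      Nat.count_eq_card_filter_range (fun y => y ∈ B) (Nat.count (· ∈ A) x)]
  · ext y
    simp only [Finset.mem_image, Finset.mem_filter, Finset.mem_range, idxSet, enumOf,
      Set.mem_image]
    constructor
    · rintro ⟨hy, b, hb, rfl⟩
      exact ⟨b, ⟨(Nat.lt_nth_iff_count_lt hA').2 hy, hb⟩, rfl⟩
    · rintro ⟨b, ⟨hbx, hb⟩, rfl⟩
      exact ⟨(Nat.lt_nth_iff_count_lt hA').1 hbx, b, hb, rfl⟩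

lemma zc_of_finite {S : Set ℕ} (hS : S.Finite) : ZC S := by
  intro ε hε
  filter_upwards [tendsto_natCast_atTop_atTop.eventually_ge_atTop ((S.ncard : ℝ) / ε)] with n hn
  have hb : (cnt S n : ℝ) ≤ (S.ncard : ℝ) := by
    rw [cnt_eq_ncard]
    exact_mod_cast Set.ncard_le_ncard Set.inter_subset_left hS
  have : (S.ncard : ℝ) ≤ ε * n := by rw [div_le_iff₀ hε] at hn; linarith
  linarith

lemma zc_idx_left {A B : Set ℕ} {c : ℝ} (hd : HasDensity A c) (hc : 0 < c)
    (h : ZC (idxSet A B)) : ZC B := by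
  have hA := density_infinite hd hc
  have hA' : {n : ℕ | n ∈ A}.Infinite := by rwa [Set.setOf_mem_eq]
  have hnth := density_nth_ub hd hc hA'
  intro ε hε
  have hK : (0 : ℝ) < 8 / c + 1 := by positivity
  have h1 := h (ε / (8 / c + 1)) (by positivity)
  obtain ⟨N1, hN1⟩ := eventually_atTop.1 h1
  obtain ⟨N2, hN2⟩ := eventually_atTop.1 hnth
  refine eventually_atTop.2 ⟨max (max N1 N2) 1, fun m hm => ?_⟩
  have hm1 : 1 ≤ m := le_trans (le_max_right _ _) hm
  have hmN1 : N1 ≤ m := le_trans ((le_max_left _ _).trans (le_max_left _ _)) hm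
  have hmN2 : N2 ≤ m := le_trans ((le_max_right _ _).trans (le_max_left _ _)) hm
  set x := Nat.nth (· ∈ A) m + 1 with hx
  have hmx : m + 1 ≤ x := by
    have := Nat.le_nth (p := (· ∈ A)) (n := m) (fun hf => absurd hf hA')
    omega
  have hcntAx : cnt A x = m + 1 := Nat.count_nth_succ_of_infinite hA' m
  have step1 : cnt B m ≤ cnt (idxSet A B) x := by
    rw [cnt_idx A B hA x, hcntAx]
    exact cnt_mono B (Nat.le_succ m)
  have hmR : (1 : ℝ) ≤ (m : ℝ) := by exact_mod_cast hm1
  have hxm : (x : ℝ) ≤ (8 / c + 1) * m := by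
    have h2 := hN2 m hmN2
    push_cast [hx]
    linarith
  have step2 := hN1 x (by omega)
  calc (cnt B m : ℝ) ≤ (cnt (idxSet A B) x : ℝ) := by exact_mod_cast step1
    _ ≤ ε / (8 / c + 1) * x := step2
    _ ≤ ε / (8 / c + 1) * ((8 / c + 1) * m) := by
        apply mul_le_mul_of_nonneg_left hxm (by positivity)
    _ = ε * m := by field_simp

lemma zc_idx_right {A B : Set ℕ} {c : ℝ} (hd : HasDensity A c) (hc : 0 < c)
    (hB : B.Infinite) (h : ZC (idxSet B A)) : ZC B := by
  obtain ⟨U, hU⟩ := eventually_atTop.1 (density_cnt_lb hd hc)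
  intro ε hε
  have h1 := h (c / 4 * ε) (by positivity)
  filter_upwards [h1, tendsto_natCast_atTop_atTop.eventually_ge_atTop ((U : ℝ) / ε)] with x hx hUx
  rw [cnt_idx B A hB x] at hx
  have hUε : (U : ℝ) ≤ ε * x := by rw [div_le_iff₀ hε] at hUx; linarith
  by_cases hu : U ≤ cnt B x
  · have h2 := hU _ hu
    nlinarith
  · have h3 : (cnt B x : ℝ) ≤ (U : ℝ) := by
      exact_mod_cast (not_le.1 hu).le
    linarith

lemma cnt_anti_seqLE {X Y : Set ℕ} (hX : X.Infinite) (hle : seqLE X Y) (x : ℕ) :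
    cnt Y x ≤ cnt X x := by
  have hX' : {n : ℕ | n ∈ X}.Infinite := by rwa [Set.setOf_mem_eq]
  by_contra hlt
  push_neg at hlt
  have h1 : Nat.nth (· ∈ Y) (cnt X x) < x := Nat.nth_lt_of_lt_count hlt
  have h2 : Nat.nth (· ∈ X) (cnt X x) < x := lt_of_le_of_lt (hle _) h1
  exact lt_irrefl _ ((Nat.lt_nth_iff_count_lt hX').2 h2)

lemma zc_of_seqLE {X Y : Set ℕ} (hX : X.Infinite) (hle : seqLE X Y) (h : ZC X) : ZC Y := by
  intro ε hε
  filter_upwards [h ε hε] with x hx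
  have := cnt_anti_seqLE hX hle x
  have h2 : (cnt Y x : ℝ) ≤ (cnt X x : ℝ) := by exact_mod_cast this
  linarith

/-- The Pólya ideal is thinnable. -/
theorem stmt5 : Thinnable polyaIdeal := by
  refine ⟨?_, ?_, ?_⟩
  · rintro A B ⟨c, hc0, hd⟩ hB hmem
    have hc := density_pos hd hc0
    exact hB (mem_polya_of_zc (zc_idx_left hd hc (zc_of_mem_polya hmem)))
  · rintro A B ⟨c, hc0, hd⟩ hB hmem
    have hc := density_pos hd hc0
    by_cases hBi : B.Infinite
    · exact hB (mem_polya_of_zc (zc_idx_right hd hc hBi (zc_of_mem_polya hmem)))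
    · exact hB (mem_polya_of_zc (zc_of_finite (Set.not_infinite.1 hBi)))
  · rintro X Y hX hY hle hY' hXmem
    exact hY' (mem_polya_of_zc (zc_of_seqLE hX hle (zc_of_mem_polya hXmem)))
end

section
/- Let x = (x_n) be a sequence taking values in a separable metric space. Then λ({ω ∈ (0,1] : Γ_x(Fin) = Γ_{x↾ω}(Fin)}) = 1, where Fin is the ideal of finite subsets of ℕ; that is, the set of ordinary limit points (cluster points) of x is equal to the set of ordinary limit points of almost all its subsequences, in the sense of Lebesgue measure. -/
open Filter Topology MeasureTheory Set

/-- The digit `d_{i+1}(ω)` of the non-terminating dyadic expansion of `ω ∈ (0,1]`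
(digits are indexed from `0` to match `0`-indexed sequences). -/
noncomputable def dyadicDigit (ω : ℝ) (i : ℕ) : ℤ :=
  ⌈(2 : ℝ) ^ (i + 1) * ω⌉ - 2 * ⌈(2 : ℝ) ^ i * ω⌉ + 1

/-- The set of indices kept when passing to the subsequence `x ↾ ω`. -/
def keepSet (ω : ℝ) : Set ℕ := {i | dyadicDigit ω i = 1}

/-- The subsequence `x ↾ ω` of `x`, keeping `x_i` exactly when `d_i(ω) = 1`. -/
noncomputable def subseq {X : Type*} (x : ℕ → X) (ω : ℝ) : ℕ → X :=
  fun n => x (enumOf (keepSet ω) n)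

/-- `ω` is a normal number: `(1/n) ∑_{i=1}^n d_i(ω) → 1/2`. -/
def IsNormal (ω : ℝ) : Prop :=
  Tendsto (fun n : ℕ => (∑ i ∈ Finset.range n, (dyadicDigit ω i : ℝ)) / n) atTop (𝓝 (1 / 2))

/-- `Γ_x(I)`: the set of `I`-cluster points of the sequence `x`. -/
def clusterPts {X : Type*} [TopologicalSpace X] (I : Set (Set ℕ)) (x : ℕ → X) : Set X :=
  {l | ∀ U ∈ 𝓝 l, {n | x n ∈ U} ∉ I}

/-!
Doubling `ω` modulo 1 shifts its dyadic digits and halves measure, so the set of `ω ∈ (0,1]`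
whose digits vanish on `S` has measure at most `2^{-k}` as soon as `S` has `k` elements: for
infinite `S` it is null, and almost every `ω` keeps infinitely many indices of `S`. Applying this
to the countably many sets `{n | x n ∈ U}`, `U` in a countable basis, almost every subsequence
`x ↾ ω` visits every basic open set that `x` visits infinitely often, again infinitely often; so
`x` and `x ↾ ω` have the same cluster points.
-/

lemma dyadicDigit_eq_zero_or_one (ω : ℝ) (i : ℕ) :
    dyadicDigit ω i = 0 ∨ dyadicDigit ω i = 1 := by
  unfold dyadicDigit
  set t := (2 : ℝ) ^ i * ω
  have hdouble : (2 : ℝ) ^ (i + 1) * ω = 2 * t := by ring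
  have hle : ⌈2 * t⌉ ≤ 2 * ⌈t⌉ := Int.ceil_le.mpr (by push_cast; linarith [Int.le_ceil t])
  have hgt : 2 * ⌈t⌉ - 2 < ⌈2 * t⌉ :=
    Int.lt_ceil.mpr (by push_cast; linarith [Int.ceil_lt_add_one t])
  rw [hdouble]
  omega

lemma dyadicDigit_two_mul_sub_intCast (ω : ℝ) (m : ℤ) (i : ℕ) :
    dyadicDigit (2 * ω - m) i = dyadicDigit ω (i + 1) := by
  have h₁ : (2 : ℝ) ^ (i + 1) * (2 * ω - m) = 2 ^ (i + 2) * ω - ((2 ^ (i + 1) * m : ℤ) : ℝ) := by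
    push_cast; ring
  have h₂ : (2 : ℝ) ^ i * (2 * ω - m) = 2 ^ (i + 1) * ω - ((2 ^ i * m : ℤ) : ℝ) := by
    push_cast; ring
  unfold dyadicDigit
  rw [h₁, h₂, Int.ceil_sub_intCast, Int.ceil_sub_intCast]
  ring

lemma dyadicDigit_zero_eq_one {ω : ℝ} (h₀ : 1 / 2 < ω) (h₁ : ω ≤ 1) : dyadicDigit ω 0 = 1 := by
  have hω : ⌈ω⌉ = 1 := Int.ceil_eq_iff.mpr ⟨by norm_num; linarith, by norm_num; linarith⟩
  have h2ω : ⌈2 * ω⌉ = 2 := Int.ceil_eq_iff.mpr ⟨by norm_num; linarith, by norm_num; linarith⟩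
  simp [dyadicDigit, hω, h2ω]

def digitsVanishOn (S : Set ℕ) : Set ℝ :=
  {ω | ω ∈ Set.Ioc (0 : ℝ) 1 ∧ ∀ i ∈ S, dyadicDigit ω i = 0}

lemma volume_preimage_two_mul (s : Set ℝ) :
    volume ((fun ω : ℝ => 2 * ω) ⁻¹' s) = 2⁻¹ * volume s := by
  rw [Real.volume_preimage_mul_left two_ne_zero, abs_of_pos (by norm_num),
    ENNReal.ofReal_inv_of_pos two_pos, ENNReal.ofReal_ofNat]

lemma volume_preimage_two_mul_sub (c : ℝ) (s : Set ℝ) :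
    volume ((fun ω : ℝ => 2 * ω - c) ⁻¹' s) = 2⁻¹ * volume s := by
  have : (fun ω : ℝ => 2 * ω - c) ⁻¹' s =
      (fun ω : ℝ => 2 * ω) ⁻¹' ((fun y => y + -c) ⁻¹' s) := by
    ext; simp [sub_eq_add_neg]
  rw [this, volume_preimage_two_mul, measure_preimage_add_right]

lemma two_mul_sub_mem_digitsVanishOn {S : Set ℕ} {ω : ℝ} {m : ℤ} (hω : ω ∈ digitsVanishOn S)
    (hm : 2 * ω - m ∈ Set.Ioc (0 : ℝ) 1) : 2 * ω - m ∈ digitsVanishOn ((· + 1) ⁻¹' S) :=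
  ⟨hm, fun i hi => by rw [dyadicDigit_two_mul_sub_intCast]; exact hω.2 _ hi⟩

lemma digitsVanishOn_subset_preimage_union (S : Set ℕ) :
    digitsVanishOn S ⊆ (fun ω => 2 * ω) ⁻¹' digitsVanishOn ((· + 1) ⁻¹' S) ∪
      (fun ω => 2 * ω - 1) ⁻¹' digitsVanishOn ((· + 1) ⁻¹' S) := by
  intro ω hω
  obtain ⟨h₀, h₁⟩ := hω.1
  rcases le_or_gt ω (1 / 2) with hle | hlt
  · left
    simpa using two_mul_sub_mem_digitsVanishOn (m := 0) hω ⟨by simp; linarith, by simp; linarith⟩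
  · right
    simpa using two_mul_sub_mem_digitsVanishOn (m := 1) hω ⟨by simp; linarith, by simp; linarith⟩

lemma digitsVanishOn_subset_preimage_of_zero_mem {S : Set ℕ} (hS : 0 ∈ S) :
    digitsVanishOn S ⊆ (fun ω => 2 * ω) ⁻¹' digitsVanishOn ((· + 1) ⁻¹' S) := by
  intro ω hω
  obtain ⟨h₀, h₁⟩ := hω.1
  have hle : ω ≤ 1 / 2 := by
    by_contra! hlt
    simpa [dyadicDigit_zero_eq_one hlt h₁] using hω.2 0 hS
  simpa using two_mul_sub_mem_digitsVanishOn (m := 0) hω ⟨by simp; linarith, by simp; linarith⟩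

open Classical in
lemma volume_digitsVanishOn_le (S : Set ℕ) (n : ℕ) :
    volume (digitsVanishOn S) ≤ 2⁻¹ ^ Nat.count (· ∈ S) n := by
  induction n generalizing S with
  | zero =>
    calc volume (digitsVanishOn S) ≤ volume (Set.Ioc (0 : ℝ) 1) := measure_mono fun ω hω => hω.1
      _ = _ := by simp
  | succ n ih =>
    specialize ih ((· + 1) ⁻¹' S)
    rw [Nat.count_succ']
    split_ifs with hS
    · calc volume (digitsVanishOn S)
          ≤ volume ((fun ω => 2 * ω) ⁻¹' digitsVanishOn ((· + 1) ⁻¹' S)) :=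
            measure_mono (digitsVanishOn_subset_preimage_of_zero_mem hS)
        _ ≤ 2⁻¹ * 2⁻¹ ^ Nat.count (· ∈ (· + 1) ⁻¹' S) n := by
            rw [volume_preimage_two_mul]; gcongr
        _ = _ := by rw [pow_succ']; rfl
    · calc volume (digitsVanishOn S)
          ≤ volume ((fun ω => 2 * ω) ⁻¹' digitsVanishOn ((· + 1) ⁻¹' S)) +
              volume ((fun ω => 2 * ω - 1) ⁻¹' digitsVanishOn ((· + 1) ⁻¹' S)) :=
            (measure_mono (digitsVanishOn_subset_preimage_union S)).trans (measure_union_le _ _)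
        _ = volume (digitsVanishOn ((· + 1) ⁻¹' S)) := by
            rw [volume_preimage_two_mul, volume_preimage_two_mul_sub, ← add_mul,
              ENNReal.inv_two_add_inv_two, one_mul]
        _ ≤ _ := ih

lemma volume_digitsVanishOn_of_infinite {S : Set ℕ} (hS : S.Infinite) :
    volume (digitsVanishOn S) = 0 := by
  classical
  have hbound (k : ℕ) : volume (digitsVanishOn S) ≤ 2⁻¹ ^ k := by
    simpa [Nat.count_nth_of_infinite (p := (· ∈ S)) hS k] using
      volume_digitsVanishOn_le S (Nat.nth (· ∈ S) k)
  exact le_antisymm (ge_of_tendsto' (ENNReal.tendsto_pow_atTop_nhds_zero_of_lt_one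
    (ENNReal.inv_lt_one.mpr ENNReal.one_lt_two)) hbound) bot_le

lemma ae_infinite_keepSet_inter {S : Set ℕ} (hS : S.Infinite) :
    ∀ᵐ ω, ω ∈ Set.Ioc (0 : ℝ) 1 → (keepSet ω ∩ S).Infinite := by
  have hnull : volume (⋃ N : ℕ, digitsVanishOn (S \ Set.Iio N)) = 0 :=
    measure_iUnion_null fun N => volume_digitsVanishOn_of_infinite (hS.sdiff (Set.finite_Iio N))
  refine measure_mono_null (fun ω hω => ?_) hnull
  obtain ⟨hωI, hfin⟩ := Classical.not_imp.mp hω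
  obtain ⟨N, hN⟩ := (Set.not_infinite.mp hfin).bddAbove
  refine Set.mem_iUnion.mpr ⟨N + 1, hωI, fun i ⟨hiS, hiN⟩ => ?_⟩
  refine (dyadicDigit_eq_zero_or_one ω i).resolve_right fun hi => ?_
  have := hN ⟨hi, hiS⟩
  simp only [Set.mem_Iio] at hiN
  omega

lemma clusterPts_finite_eq_comp_nth {X : Type*} [TopologicalSpace X] {B : Set (Set X)}
    (hB : TopologicalSpace.IsTopologicalBasis B) (y : ℕ → X) {K : Set ℕ} (hK : K.Infinite)
    (hKB : ∀ U ∈ B, {n | y n ∈ U}.Infinite → (K ∩ {n | y n ∈ U}).Infinite) :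
    clusterPts {S : Set ℕ | S.Finite} y =
      clusterPts {S : Set ℕ | S.Finite} (y ∘ Nat.nth (· ∈ K)) := by
  have hrange : Set.range (Nat.nth (· ∈ K)) = K := Nat.range_nth_of_infinite hK
  ext l
  constructor
  · intro hl V hV hfin
    obtain ⟨U, hUB, hlU, hUV⟩ := hB.mem_nhds_iff.mp hV
    refine hKB U hUB (hl U (hB.isOpen hUB |>.mem_nhds hlU))
      ((hfin.image (Nat.nth (· ∈ K))).subset ?_)
    rintro n ⟨hnK, hnU⟩
    obtain ⟨m, rfl⟩ : n ∈ Set.range (Nat.nth (· ∈ K)) := by rwa [hrange]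
    exact ⟨m, hUV hnU, rfl⟩
  · intro hl V hV hfin
    exact hl V hV (Set.Finite.preimage (f := Nat.nth (· ∈ K)) (Nat.nth_injective hK).injOn hfin)

lemma measure_setOf_mem_and_of_ae {α : Type*} [MeasurableSpace α] {μ : Measure α} {s : Set α}
    {P : α → Prop} (h : ∀ᵐ a ∂μ, a ∈ s → P a) : μ {a | a ∈ s ∧ P a} = μ s := by
  have : {a | a ∈ s ∧ P a} = s \ {a | ¬(a ∈ s → P a)} := by
    ext; simp +contextual
  rw [this, measure_sdiff_null (ae_iff.mp h)]

/-- For a sequence `x` in a separable metric space, the ordinary limit points of `x`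
coincide with the ordinary limit points of almost all of its subsequences
(`Fin`-cluster points are exactly ordinary limit points). -/
theorem stmt11 {M : Type*} [MetricSpace M] [TopologicalSpace.SeparableSpace M] (x : ℕ → M) :
    volume {ω : ℝ | ω ∈ Set.Ioc (0 : ℝ) 1 ∧
      clusterPts {S : Set ℕ | S.Finite} x = clusterPts {S : Set ℕ | S.Finite} (subseq x ω)} = 1 := by
  obtain ⟨B, hBc, -, hB⟩ := TopologicalSpace.exists_countable_basis M
  have hbasis : ∀ᵐ ω, ∀ U ∈ B, ω ∈ Set.Ioc (0 : ℝ) 1 → {n | x n ∈ U}.Infinite →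
      (keepSet ω ∩ {n | x n ∈ U}).Infinite := by
    refine (ae_ball_iff hBc).mpr fun U _ => ?_
    by_cases hU : {n | x n ∈ U}.Infinite
    · filter_upwards [ae_infinite_keepSet_inter hU] with ω hω hωI _ using hω hωI
    · exact Eventually.of_forall fun _ _ hU' => absurd hU' hU
  have hae : ∀ᵐ ω, ω ∈ Set.Ioc (0 : ℝ) 1 →
      clusterPts {S : Set ℕ | S.Finite} x = clusterPts {S : Set ℕ | S.Finite} (subseq x ω) := by
    filter_upwards [ae_infinite_keepSet_inter Set.infinite_univ, hbasis] with ω hK hKB hωI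
    -- `subseq x ω` unfolds to `x ∘ Nat.nth (· ∈ keepSet ω)`
    exact clusterPts_finite_eq_comp_nth hB x (by simpa using hK hωI) fun U hU => hKB U hU hωI
  rw [measure_setOf_mem_and_of_ae hae, Real.volume_Ioc]
  simp
end
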